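/- The separability probability of the conditioned two-qubit state space is independent of the Bloch radius: for every a ∈ [0,1), μH^{12}(D^a_sep) · μH^{12}(D^0) = μH^{12}(D^0_sep) · μH^{12}(D^a). -/

import Mathlib

open MeasureTheory Matrix
open scoped Kronecker ComplexOrder

noncomputable instance matrixFrobenius (m n : Type*) [Fintype m] [Fintype n] :
    NormedAddCommGroup (Matrix m n ℂ) :=
  Matrix.frobeniusNormedAddCommGroup

noncomputable instance matrixMeasurableSpace (m n : Type*) [Fintype m] [Fintype n] :
    MeasurableSpace (Matrix m n ℂ) := borel _

instance matrixBorelSpace (m n : Type*) [Fintype m] [Fintype n] :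
    @BorelSpace (Matrix m n ℂ)
      (matrixFrobenius m n).toUniformSpace.toTopologicalSpace _ := ⟨rfl⟩

/-- Partial trace over the second factor of a two-qubit matrix. -/
noncomputable def ptrace2 (ρ : Matrix (Fin 2 × Fin 2) (Fin 2 × Fin 2) ℂ) :
    Matrix (Fin 2) (Fin 2) ℂ :=
  fun i j => ∑ k, ρ (i, k) (j, k)

/-- A density matrix: positive semidefinite of trace 1. -/
def IsDensity {n : Type*} [Fintype n] (ρ : Matrix n n ℂ) : Prop :=
  ρ.PosSemidef ∧ ρ.trace = 1

/-- Separability of a two-qubit density matrix. -/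
def SeparableState (ρ : Matrix (Fin 2 × Fin 2) (Fin 2 × Fin 2) ℂ) : Prop :=
  ∃ (K : ℕ) (_ : 1 ≤ K) (w : Fin K → ℝ)
    (σ τ : Fin K → Matrix (Fin 2) (Fin 2) ℂ),
    (∀ k, 0 ≤ w k) ∧ (∑ k, w k = 1) ∧
    (∀ k, IsDensity (σ k)) ∧ (∀ k, IsDensity (τ k)) ∧
    ρ = ∑ k, (w k : ℂ) • (σ k ⊗ₖ τ k)

/-- The Pauli matrix `σ₃ = diag(1, −1)`. -/
noncomputable def sigma3 : Matrix (Fin 2) (Fin 2) ℂ := !![1, 0; 0, -1]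

/-- `D^a`: two-qubit density matrices whose first marginal is
`(1/2)(I₂ + a σ₃)`. -/
def Dslice (a : ℝ) : Set (Matrix (Fin 2 × Fin 2) (Fin 2 × Fin 2) ℂ) :=
  {ρ | IsDensity ρ ∧
    ptrace2 ρ = (1 / 2 : ℂ) • ((1 : Matrix (Fin 2) (Fin 2) ℂ) + (a : ℂ) • sigma3)}


open Module ComplexStarModule

/-! The filtering map `ρ ↦ (N ⊗ 1) ρ (N ⊗ 1)ᴴ` with `N = diag(√(1+a), √(1-a))` is a real-linear
bijection of two-qubit matrices. Since `N (I/2) Nᴴ = (I + a σ₃)/2` it maps `D^0` onto `D^a`, and,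
after renormalising each product term, it maps separable states to separable states, in both
directions; so it maps `D^0_sep` onto `D^a_sep`. Both `D^0` and `D^0_sep` lie in translates of the
space of Hermitian matrices with vanishing partial trace, which has real dimension `16 - 4 = 12`
and is preserved by the map. On such a translate `μH^12` is a Haar measure, so the map multiplies
the measure of both sets by the same factor `|det|`. -/

attribute [local instance] Matrix.frobeniusNormedSpace

section SelfAdjoint

variable {A : Type*} [AddCommGroup A] [Module ℂ A] [StarAddMonoid A] [StarModule ℂ A]

noncomputable def realImaginaryPartEquiv : A ≃ₗ[ℝ] selfAdjoint A × selfAdjoint A where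
  toFun a := (ℜ a, ℑ a)
  invFun p := (p.1 : A) + Complex.I • (p.2 : A)
  map_add' a b := by simp
  map_smul' r a := by simp
  left_inv := realPart_add_I_smul_imaginaryPart
  right_inv p := by simp

lemma finrank_selfAdjoint_submodule [FiniteDimensional ℂ A] :
    finrank ℝ (selfAdjoint.submodule ℝ A) = finrank ℂ A := by
  change finrank ℝ (selfAdjoint A) = _
  have : Module.Finite ℝ (selfAdjoint A) := .of_surjective _ realPart_surjective
  have h := (realImaginaryPartEquiv (A := A)).finrank_eq
  rw [finrank_prod, ← Module.finrank_mul_finrank ℝ ℂ A, Complex.finrank_real_complex] at h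
  omega

end SelfAdjoint

theorem hausdorffMeasure_image_linearMap_of_sub_mem {V : Type*} [NormedAddCommGroup V]
    [NormedSpace ℝ V] [MeasurableSpace V] [BorelSpace V] (W : Submodule ℝ V)
    [FiniteDimensional ℝ W] (L : V →ₗ[ℝ] V) (hLW : ∀ w ∈ W, L w ∈ W) {s : Set V}
    (hs : ∀ x ∈ s, ∀ y ∈ s, x - y ∈ W) :
    μH[finrank ℝ W] (L '' s) = ENNReal.ofReal |(L.restrict hLW).det| * μH[finrank ℝ W] s := by
  rcases s.eq_empty_or_nonempty with rfl | ⟨c, hc⟩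
  · simp
  let _ : MeasurableSpace W := borel W
  have : BorelSpace W := ⟨rfl⟩
  have translate (v : V) : Isometry fun w : W ↦ v + (w : V) :=
    (IsometryEquiv.addLeft v).isometry.comp isometry_subtype_coe
  set A : Set W := (fun w : W ↦ c + (w : V)) ⁻¹' s
  have hsA : s = (fun w : W ↦ c + (w : V)) '' A :=
    (Set.image_preimage_eq_of_subset fun x hx ↦ ⟨⟨x - c, hs x hx c hc⟩, by simp⟩).symm
  have hLs : L '' s = (fun w : W ↦ L c + (w : V)) '' (L.restrict hLW '' A) := by
    rw [hsA, Set.image_image, Set.image_image]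
    simp [LinearMap.restrict_apply]
  rw [hLs, hsA, (translate _).hausdorffMeasure_image (.inl (Nat.cast_nonneg _)),
    (translate _).hausdorffMeasure_image (.inl (Nat.cast_nonneg _)),
    Measure.addHaar_image_linearMap]

section LocalCongr

variable {m n : Type*} [Fintype m] [DecidableEq m] [Fintype n] [DecidableEq n]

def localCongr (M : Matrix m m ℂ) :
    Matrix (m × n) (m × n) ℂ →ₗ[ℂ] Matrix (m × n) (m × n) ℂ where
  toFun ρ := (M ⊗ₖ 1) * ρ * (M ⊗ₖ 1)ᴴ
  map_add' ρ σ := by simp only [Matrix.mul_add, Matrix.add_mul]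
  map_smul' c ρ := by simp

lemma localCongr_apply (M : Matrix m m ℂ) (ρ : Matrix (m × n) (m × n) ℂ) :
    localCongr M ρ = (M ⊗ₖ 1) * ρ * (M ⊗ₖ 1)ᴴ := rfl

lemma localCongr_mul (M M' : Matrix m m ℂ) (ρ : Matrix (m × n) (m × n) ℂ) :
    localCongr (M * M') ρ = localCongr M (localCongr M' ρ) := by
  have hkron : (M * M') ⊗ₖ (1 : Matrix n n ℂ) = (M ⊗ₖ 1) * (M' ⊗ₖ 1) := by
    rw [← Matrix.mul_kronecker_mul, Matrix.mul_one]
  simp only [localCongr_apply, hkron, Matrix.conjTranspose_mul, Matrix.mul_assoc]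

lemma localCongr_one (ρ : Matrix (m × n) (m × n) ℂ) : localCongr 1 ρ = ρ := by
  simp [localCongr_apply]

lemma localCongr_localCongr_inv {M : Matrix m m ℂ} (hM : IsUnit M.det)
    (ρ : Matrix (m × n) (m × n) ℂ) : localCongr M (localCongr M⁻¹ ρ) = ρ := by
  rw [← localCongr_mul, Matrix.mul_nonsing_inv M hM, localCongr_one]

lemma localCongr_kronecker (M σ : Matrix m m ℂ) (τ : Matrix n n ℂ) :
    localCongr M (σ ⊗ₖ τ) = (M * σ * Mᴴ) ⊗ₖ τ := by
  rw [localCongr_apply, Matrix.conjTranspose_kronecker, Matrix.conjTranspose_one,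
    ← Matrix.mul_kronecker_mul, ← Matrix.mul_kronecker_mul, Matrix.one_mul, Matrix.mul_one]

lemma Matrix.PosSemidef.localCongr {ρ : Matrix (m × n) (m × n) ℂ} (hρ : ρ.PosSemidef)
    (M : Matrix m m ℂ) : (localCongr M ρ).PosSemidef :=
  hρ.mul_mul_conjTranspose_same _

lemma Matrix.IsHermitian.localCongr {ρ : Matrix (m × n) (m × n) ℂ} (hρ : ρ.IsHermitian)
    (M : Matrix m m ℂ) : (localCongr M ρ).IsHermitian :=
  isHermitian_mul_mul_conjTranspose _ hρ

lemma nonsing_inv_mul_mul_conjTranspose_nonsing_inv {M : Matrix m m ℂ} (hM : IsUnit M.det)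
    (P : Matrix m m ℂ) : M⁻¹ * (M * P * Mᴴ) * M⁻¹ᴴ = P := by
  rw [← Matrix.mul_assoc, ← Matrix.mul_assoc, Matrix.nonsing_inv_mul M hM, Matrix.one_mul,
    Matrix.mul_assoc, ← Matrix.conjTranspose_mul, Matrix.nonsing_inv_mul M hM,
    Matrix.conjTranspose_one, Matrix.mul_one]

end LocalCongr

local notation "M₂" => Matrix (Fin 2) (Fin 2) ℂ
local notation "M₄" => Matrix (Fin 2 × Fin 2) (Fin 2 × Fin 2) ℂ

noncomputable def ptrace2LinearMap : M₄ →ₗ[ℂ] M₂ where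
  toFun := ptrace2
  map_add' ρ σ := by ext; simp [ptrace2, Finset.sum_add_distrib]
  map_smul' c ρ := by ext; simp [ptrace2, mul_add]

lemma trace_ptrace2 (ρ : M₄) : (ptrace2 ρ).trace = ρ.trace := by
  simp [ptrace2, Matrix.trace, Fintype.sum_prod_type]

lemma conjTranspose_ptrace2 (ρ : M₄) : (ptrace2 ρ)ᴴ = ptrace2 ρᴴ := by
  ext; simp [ptrace2]

lemma ptrace2_kronecker (σ τ : M₂) : ptrace2 (σ ⊗ₖ τ) = τ.trace • σ := by
  ext; simp [ptrace2, Matrix.trace, mul_add, mul_comm]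

lemma ptrace2_localCongr (M : M₂) (ρ : M₄) :
    ptrace2 (localCongr M ρ) = M * ptrace2 ρ * Mᴴ := by
  ext i j
  simp only [ptrace2, localCongr_apply, Matrix.mul_apply, Matrix.conjTranspose_apply,
    Matrix.kroneckerMap_apply, Fintype.sum_prod_type, Matrix.one_apply, Fin.sum_univ_two]
  fin_cases i <;> fin_cases j <;> simp <;> ring

lemma SeparableState.of_sum_kronecker {ρ : M₄} {K : ℕ} (hK : 1 ≤ K) (w : Fin K → ℝ)
    (A τ : Fin K → M₂) (hw : ∀ k, 0 ≤ w k) (hA : ∀ k, (A k).PosSemidef) (hA0 : ∀ k, A k ≠ 0)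
    (hτ : ∀ k, IsDensity (τ k)) (hρ : ρ = ∑ k, (w k : ℂ) • (A k ⊗ₖ τ k))
    (htr : ρ.trace = 1) : SeparableState ρ := by
  have hpos (k : Fin K) : 0 < (A k).trace :=
    (hA k).trace_nonneg.lt_of_ne' fun h ↦ hA0 k ((hA k).trace_eq_zero_iff.1 h)
  choose r hr0 hr using fun k ↦ RCLike.pos_iff_exists_ofReal.1 (hpos k)
  have hr0' (k : Fin K) : (r k : ℂ) ≠ 0 := Complex.ofReal_ne_zero.2 (hr0 k).ne'
  refine ⟨K, hK, fun k ↦ w k * r k, fun k ↦ (r k : ℂ)⁻¹ • A k, τ,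
    fun k ↦ mul_nonneg (hw k) (hr0 k).le, ?_, fun k ↦ ⟨?_, ?_⟩, hτ, ?_⟩
  · have : ρ.trace = ∑ k, ((w k * r k : ℝ) : ℂ) := by
      simp [hρ, Matrix.trace_sum, Matrix.trace_kronecker, (hτ _).2, ← hr]
    exact_mod_cast this.symm.trans htr
  · exact (hA k).smul (inv_nonneg.2 (Complex.zero_le_real.2 (hr0 k).le))
  · rw [Matrix.trace_smul, ← hr, smul_eq_mul]
    exact inv_mul_cancel₀ (hr0' k)
  · rw [hρ]
    refine Finset.sum_congr rfl fun k _ ↦ ?_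
    rw [Matrix.smul_kronecker, smul_smul, Complex.ofReal_mul, mul_assoc,
      mul_inv_cancel₀ (hr0' k), mul_one]

lemma SeparableState.localCongr {ρ : M₄} (hρ : SeparableState ρ) {M : M₂} (hM : IsUnit M.det)
    (htr : (localCongr M ρ).trace = 1) : SeparableState (localCongr M ρ) := by
  obtain ⟨K, hK, w, σ, τ, hw, -, hσ, hτ, rfl⟩ := hρ
  refine .of_sum_kronecker hK w (fun k ↦ M * σ k * Mᴴ) τ hw
    (fun k ↦ (hσ k).1.mul_mul_conjTranspose_same M) (fun k h ↦ ?_) hτ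
    (by simp [map_sum, localCongr_kronecker]) htr
  have hσk := (hσ k).2
  rw [← nonsing_inv_mul_mul_conjTranspose_nonsing_inv hM (σ k), h, Matrix.mul_zero,
    Matrix.zero_mul, Matrix.trace_zero] at hσk
  exact zero_ne_one hσk

def marginalSlice (P : M₂) : Set M₄ := {ρ | IsDensity ρ ∧ ptrace2 ρ = P}

lemma localCongr_mem_marginalSlice {M P : M₂} (hQ : (M * P * Mᴴ).trace = 1) {ρ : M₄}
    (hρ : ρ ∈ marginalSlice P) : localCongr M ρ ∈ marginalSlice (M * P * Mᴴ) := by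
  obtain ⟨⟨hpsd, -⟩, hmarg⟩ := hρ
  have hmarg' : ptrace2 (localCongr M ρ) = M * P * Mᴴ := by rw [ptrace2_localCongr, hmarg]
  exact ⟨⟨hpsd.localCongr M, by rw [← trace_ptrace2, hmarg', hQ]⟩, hmarg'⟩

lemma image_localCongr_marginalSlice {M P : M₂} (hM : IsUnit M.det) (hP : P.trace = 1)
    (hQ : (M * P * Mᴴ).trace = 1) {p : M₄ → Prop}
    (hp : ∀ (N : M₂) (ρ : M₄), IsUnit N.det → (localCongr N ρ).trace = 1 → p ρ →
      p (localCongr N ρ)) :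
    localCongr M '' {ρ ∈ marginalSlice P | p ρ} = {ρ ∈ marginalSlice (M * P * Mᴴ) | p ρ} := by
  refine Set.Subset.antisymm ?_ fun ρ ⟨hρ, hpρ⟩ ↦ ?_
  · rintro _ ⟨ρ, ⟨hρ, hpρ⟩, rfl⟩
    have h := localCongr_mem_marginalSlice hQ hρ
    exact ⟨h, hp M ρ hM h.1.2 hpρ⟩
  · have hρ' := localCongr_mem_marginalSlice (M := M⁻¹)
      (by rwa [nonsing_inv_mul_mul_conjTranspose_nonsing_inv hM]) hρ
    rw [nonsing_inv_mul_mul_conjTranspose_nonsing_inv hM] at hρ'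
    refine ⟨localCongr M⁻¹ ρ, ⟨hρ', ?_⟩, localCongr_localCongr_inv hM ρ⟩
    exact hp M⁻¹ ρ (Matrix.isUnit_nonsing_inv_det M hM) hρ'.1.2 hpρ

noncomputable def sliceDirection : Submodule ℝ M₄ :=
  selfAdjoint.submodule ℝ M₄ ⊓ LinearMap.ker (ptrace2LinearMap.restrictScalars ℝ)

lemma mem_sliceDirection {w : M₄} : w ∈ sliceDirection ↔ wᴴ = w ∧ ptrace2 w = 0 := Iff.rfl

lemma sub_mem_sliceDirection {P : M₂} {ρ σ : M₄} (hρ : ρ ∈ marginalSlice P)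
    (hσ : σ ∈ marginalSlice P) : ρ - σ ∈ sliceDirection := by
  refine mem_sliceDirection.2 ⟨?_, ?_⟩
  · rw [Matrix.conjTranspose_sub, hρ.1.1.1, hσ.1.1.1]
  · change ptrace2LinearMap (ρ - σ) = 0
    rw [map_sub, sub_eq_zero]
    exact hρ.2.trans hσ.2.symm

lemma localCongr_mem_sliceDirection (M : M₂) :
    ∀ w ∈ sliceDirection, localCongr M w ∈ sliceDirection := by
  intro w hw
  rw [mem_sliceDirection] at hw ⊢
  refine ⟨Matrix.IsHermitian.localCongr hw.1 M, ?_⟩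
  rw [ptrace2_localCongr, hw.2, Matrix.mul_zero, Matrix.zero_mul]

lemma range_ptrace2_selfAdjoint :
    LinearMap.range ((ptrace2LinearMap.restrictScalars ℝ).domRestrict
      (selfAdjoint.submodule ℝ M₄)) = selfAdjoint.submodule ℝ M₂ := by
  ext P
  constructor
  · rintro ⟨ρ, rfl⟩
    exact (conjTranspose_ptrace2 ρ).trans (congrArg ptrace2 ρ.2)
  · intro hP
    have hP' : Pᴴ = P := hP
    refine ⟨⟨P ⊗ₖ ((1 / 2 : ℂ) • 1), ?_⟩, ?_⟩
    · change (P ⊗ₖ _)ᴴ = _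
      rw [Matrix.conjTranspose_kronecker, hP']
      simp
    · change ptrace2 (P ⊗ₖ _) = P
      rw [ptrace2_kronecker]
      norm_num

lemma finrank_sliceDirection : finrank ℝ sliceDirection = 12 := by
  set S := selfAdjoint.submodule ℝ M₄
  set g := (ptrace2LinearMap.restrictScalars ℝ).domRestrict S
  have hdir : sliceDirection = (LinearMap.ker g).map S.subtype := by
    rw [LinearMap.ker_domRestrict, Submodule.map_comap_subtype]
    rfl
  have hdim := g.finrank_range_add_finrank_ker
  rw [range_ptrace2_selfAdjoint, ← Submodule.finrank_map_subtype_eq, ← hdir] at hdim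
  simp [S, finrank_selfAdjoint_submodule, Module.finrank_matrix] at hdim
  omega

lemma exists_hausdorffMeasure_image_localCongr (M P : M₂) :
    ∃ c, ∀ s ⊆ marginalSlice P, μH[(12 : ℝ)] (localCongr M '' s) = c * μH[(12 : ℝ)] s :=
  ⟨_, fun s hs ↦ by
    simpa [finrank_sliceDirection] using hausdorffMeasure_image_linearMap_of_sub_mem
      sliceDirection ((localCongr M).restrictScalars ℝ) (localCongr_mem_sliceDirection M)
      fun x hx y hy ↦ sub_mem_sliceDirection (hs hx) (hs hy)⟩

noncomputable def blochMarginal (a : ℝ) : M₂ := (1 / 2 : ℂ) • ((1 : M₂) + (a : ℂ) • sigma3)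

lemma Dslice_eq_marginalSlice (a : ℝ) : Dslice a = marginalSlice (blochMarginal a) := rfl

lemma trace_blochMarginal (a : ℝ) : (blochMarginal a).trace = 1 := by
  simp [blochMarginal, sigma3, Matrix.trace_fin_two]

noncomputable def blochFilter (a : ℝ) : M₂ :=
  Matrix.diagonal ![(√(1 + a) : ℂ), (√(1 - a) : ℂ)]

lemma isUnit_det_blochFilter {a : ℝ} (ha0 : -1 < a) (ha1 : a < 1) :
    IsUnit (blochFilter a).det := by
  have h1 : (0 : ℝ) < √(1 + a) := Real.sqrt_pos.2 (by linarith)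
  have h2 : (0 : ℝ) < √(1 - a) := Real.sqrt_pos.2 (by linarith)
  simp [blochFilter, Matrix.det_diagonal, Fin.prod_univ_two, h1.ne', h2.ne']

lemma blochFilter_mul_blochMarginal_zero {a : ℝ} (ha0 : -1 ≤ a) (ha1 : a ≤ 1) :
    blochFilter a * blochMarginal 0 * (blochFilter a)ᴴ = blochMarginal a := by
  have h1 : (√(1 + a) : ℂ) ^ 2 = 1 + a := by
    rw [← Complex.ofReal_pow, Real.sq_sqrt (by linarith)]; push_cast; ring
  have h2 : (√(1 - a) : ℂ) ^ 2 = 1 - a := by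
    rw [← Complex.ofReal_pow, Real.sq_sqrt (by linarith)]; push_cast; ring
  ext i j
  fin_cases i <;> fin_cases j <;>
    simp [blochFilter, blochMarginal, sigma3, Matrix.diagonal_conjTranspose]
  · linear_combination h1 / 2
  · linear_combination h2 / 2

lemma image_blochFilter_Dslice {a : ℝ} (ha0 : -1 < a) (ha1 : a < 1) {p : M₄ → Prop}
    (hp : ∀ (N : M₂) (ρ : M₄), IsUnit N.det → (localCongr N ρ).trace = 1 → p ρ →
      p (localCongr N ρ)) :
    localCongr (blochFilter a) '' {ρ ∈ Dslice 0 | p ρ} = {ρ ∈ Dslice a | p ρ} := by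
  have hmarg := blochFilter_mul_blochMarginal_zero ha0.le ha1.le
  rw [Dslice_eq_marginalSlice, Dslice_eq_marginalSlice, ← hmarg]
  exact image_localCongr_marginalSlice (isUnit_det_blochFilter ha0 ha1) (trace_blochMarginal 0)
    (by rw [hmarg, trace_blochMarginal]) hp

theorem sep_probability_independent_of_bloch_radius (a : ℝ) (ha0 : 0 ≤ a) (ha1 : a < 1) :
    μH[(12 : ℝ)] {ρ ∈ Dslice a | SeparableState ρ} * μH[(12 : ℝ)] (Dslice 0)
      = μH[(12 : ℝ)] {ρ ∈ Dslice 0 | SeparableState ρ} * μH[(12 : ℝ)] (Dslice a) := by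
  have ha0' : -1 < a := by linarith
  have hsep := image_blochFilter_Dslice ha0' ha1 (p := SeparableState)
    fun _ _ hN htr hρ ↦ hρ.localCongr hN htr
  have hall : localCongr (blochFilter a) '' Dslice 0 = Dslice a := by
    simpa using image_blochFilter_Dslice ha0' ha1 (p := fun _ ↦ True) (by simp)
  obtain ⟨c, hscale⟩ := exists_hausdorffMeasure_image_localCongr (blochFilter a) (blochMarginal 0)
  rw [← hsep, ← hall, hscale _ fun ρ hρ ↦ hρ.1, hscale (Dslice 0) subset_rfl]
  ring
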